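/- Suppose 𝕏, 𝕐, ℤ are Banach spaces such that 𝕏 is compactly embedded in 𝕐 (every bounded subset of 𝕏 is precompact in 𝕐), 𝕐 is continuously embedded in ℤ, and there exist C > 0 and θ ∈ (0,1) with ‖x‖_𝕐 ≤ C‖x‖_𝕏^{1−θ}‖x‖_ℤ^θ for all x ∈ 𝕏. Let 1 < p₁, p₂ ≤ ∞ and T > 0. Then every set of functions that is bounded both in L^{p₁}([0,T]; 𝕏) and in W^{1,p₂}([0,T]; ℤ) is precompact in L^p([0,T]; 𝕐) for all p ≤ p₁/(1−θ). -/

import Mathlib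

noncomputable section

open MeasureTheory Filter Topology Set
open scoped Topology Real NNReal ENNReal

/-- Points of the plane. -/
abbrev Pt : Type := EuclideanSpace ℝ (Fin 2)
/-- Real 2-vectors. -/
abbrev Vec : Type := Fin 2 → ℝ
/-- Complex 2-vectors. -/
abbrev CVec : Type := Fin 2 → ℂ

/-- Standard basis vector of ℝ². -/
def ee (i : Fin 2) : Pt := EuclideanSpace.single i 1

/-- Partial derivative in the `i`-th coordinate direction. -/
def pd {E : Type*} [NormedAddCommGroup E] [NormedSpace ℝ E] (i : Fin 2) (f : Pt → E)
    (x : Pt) : E :=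
  fderiv ℝ f x (ee i)

/-- Time derivative of a time-dependent field. -/
def tderiv {E : Type*} [NormedAddCommGroup E] [NormedSpace ℝ E] (u : ℝ → Pt → E) (t : ℝ)
    (x : Pt) : E :=
  deriv (fun s => u s x) t

/-- Gradient of a scalar function. -/
def grad (f : Pt → ℝ) (x : Pt) : Vec := fun i => pd i f x

/-- Gradient of a complex-valued function. -/
def gradC (u : Pt → ℂ) (x : Pt) : CVec := fun i => pd i u x

/-- Laplacian of a scalar function. -/
def lap (f : Pt → ℝ) (x : Pt) : ℝ :=
  pd 0 (fun y => pd 0 f y) x + pd 1 (fun y => pd 1 f y) x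

/-- Laplacian of a complex-valued function. -/
def lapC (u : Pt → ℂ) (x : Pt) : ℂ :=
  pd 0 (fun y => pd 0 u y) x + pd 1 (fun y => pd 1 u y) x

/-- `X⊥ = (−X₂, X₁)`. -/
def perp (X : Vec) : Vec := ![-(X 1), X 0]

/-- `∇⊥ f = (∇f)⊥`. -/
def gradPerp (f : Pt → ℝ) (x : Pt) : Vec := perp (grad f x)

/-- Euclidean dot product of 2-vectors. -/
def dotV (X Y : Vec) : ℝ := X 0 * Y 0 + X 1 * Y 1

/-- Squared Euclidean norm of a 2-vector. -/
def normSqV (X : Vec) : ℝ := X 0 ^ 2 + X 1 ^ 2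

/-- Divergence of a plane vector field. -/
def divV (X : Pt → Vec) (x : Pt) : ℝ :=
  pd 0 (fun y => X y 0) x + pd 1 (fun y => X y 1) x

/-- Two-dimensional curl of a plane vector field. -/
def curlV (X : Pt → Vec) (x : Pt) : ℝ :=
  pd 0 (fun y => X y 1) x - pd 1 (fun y => X y 0) x

/-- `(a,c) = Re a Re c + Im a Im c`. -/
def cPair (a c : ℂ) : ℝ := a.re * c.re + a.im * c.im

/-- `(a, W)` for `a ∈ ℂ`, `W ∈ ℂ²`: the real 2-vector `((a,W₁),(a,W₂))`. -/
def cPairV (a : ℂ) (W : CVec) : Vec := fun i => cPair a (W i)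

/-- Pairing of a complex 2-vector against a real 2-vector. -/
def dotCV (W : CVec) (X : Vec) : ℂ := W 0 * (X 0 : ℂ) + W 1 * (X 1 : ℂ)

/-- Squared norm of a complex 2-vector. -/
def normSqCV (W : CVec) : ℝ := Complex.normSq (W 0) + Complex.normSq (W 1)

/-- Covariant gradient `∇_A u = ∇u − iAu`. -/
def covGrad (A : Pt → Vec) (u : Pt → ℂ) (x : Pt) : CVec :=
  fun i => pd i u x - Complex.I * (A x i : ℂ) * u x

/-- Covariant Laplacian `Δ_A u = (∇ − iA)·(∇_A u)`. -/
def covLap (A : Pt → Vec) (u : Pt → ℂ) (x : Pt) : ℂ :=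
  (pd 0 (fun y => covGrad A u y 0) x - Complex.I * (A x 0 : ℂ) * covGrad A u x 0) +
  (pd 1 (fun y => covGrad A u y 1) x - Complex.I * (A x 1 : ℂ) * covGrad A u x 1)

/-- `|log ε|`. -/
def absLog (ε : ℝ) : ℝ := |Real.log ε|

/-- Vorticity `μ(v,B) = curl((iv, ∇_B v) + B)`. -/
def vort (v : Pt → ℂ) (B : Pt → Vec) (x : Pt) : ℝ :=
  curlV (fun y i => cPair (Complex.I * v y) (covGrad B v y i) + B y i) x

/-- Vorticity without gauge: `μ(u) = curl(iu, ∇u)`. -/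
def vortU (u : Pt → ℂ) (x : Pt) : ℝ :=
  curlV (fun y i => cPair (Complex.I * u y) (gradC u y i)) x

/-- Velocity `V(v,B) = ∇(iv,∂_t v) + ∂_t(iv,∇_B v) − ∂_t B`. -/
def vel (v : ℝ → Pt → ℂ) (B : ℝ → Pt → Vec) (t : ℝ) (x : Pt) : Vec := fun i =>
  pd i (fun y => cPair (Complex.I * v t y) (tderiv v t y)) x
  + deriv (fun s => cPair (Complex.I * v s x) (covGrad (B s) (v s) x i)) t
  - deriv (fun s => B s x i) t

/-- Pinned free-energy density `g_ε(v,B)`. -/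
def gEps (b : Pt → ℝ) (ε : ℝ) (v : Pt → ℂ) (B : Pt → Vec) (x : Pt) : ℝ :=
  (1/2) * (b x * normSqCV (covGrad B v x)
    + (b x)^2 / (2*ε^2) * (1 - Complex.normSq (v x))^2
    + (curlV B x)^2)

/-- Free energy `F_ε(v,B)`. -/
def FEps (Ω : Set Pt) (b : Pt → ℝ) (ε : ℝ) (v : Pt → ℂ) (B : Pt → Vec) : ℝ :=
  ∫ x in Ω, gEps b ε v B x

/-- `f_ε = Δ√b/√b − |Z_ε|² + β|log ε|²φ₀`. -/
def fEps (b φ₀ : Pt → ℝ) (Z : Pt → Vec) (β ε : ℝ) (x : Pt) : ℝ :=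
  lap (fun y => Real.sqrt (b y)) x / Real.sqrt (b x)
  - (absLog ε)^2 * normSqV (Z x) + β * (absLog ε)^2 * φ₀ x

/-- Modified energy density `g̃_ε(v,B)`. -/
def gTilde (b φ₀ : Pt → ℝ) (Z : Pt → Vec) (β ε : ℝ) (v : Pt → ℂ) (B : Pt → Vec)
    (x : Pt) : ℝ :=
  gEps b ε v B x + (1 - Complex.normSq (v x))/2 * (b x * fEps b φ₀ Z β ε x)

/-- Modified energy `F̃_ε(v,B)`, with a boundary term taken w.r.t. arclength measure. -/
def FTilde (Ω : Set Pt) (ν : Pt → Vec) (b φ₀ : Pt → ℝ) (Z : Pt → Vec) (β ε : ℝ)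
    (v : Pt → ℂ) (B : Pt → Vec) : ℝ :=
  (∫ x in Ω, gTilde b φ₀ Z β ε v B x)
  + ∫ x in frontier Ω, (Complex.normSq (v x) - 1)/4 * dotV (grad b x) (ν x) ∂(μH[1])

/-- `Lᵖ` norm w.r.t. a measure. -/
def lpN {E : Type*} [NormedAddCommGroup E] (p : ℝ) (μ : Measure Pt) (f : Pt → E) : ℝ :=
  (∫ x, ‖f x‖ ^ p ∂μ) ^ (1/p)

/-- `Lᵖ` norm of an ℝ²-valued map, with Euclidean pointwise norm. -/
def lpNV (p : ℝ) (μ : Measure Pt) (f : Pt → Vec) : ℝ :=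
  (∫ x, (Real.sqrt (normSqV (f x))) ^ p ∂μ) ^ (1/p)

/-- Sup norm over a set. -/
def supN (s : Set Pt) (f : Pt → ℝ) : ℝ := ⨆ x : s, |f (x : Pt)|

/-- The Ginzburg–Landau system with applied current, for a fixed `ε`. -/
def GLSys (Ω : Set Pt) (ν : Pt → Vec) (b : Pt → ℝ) (α β σ ε : ℝ) (H : Pt → ℝ)
    (J : Pt → Vec) (u : ℝ → Pt → ℂ) (A : ℝ → Pt → Vec) (Φ : ℝ → Pt → ℝ) : Prop :=
  (∀ t : ℝ, ∀ x ∈ Ω,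
    ((α : ℂ) + Complex.I * (β : ℂ) * (absLog ε : ℂ))
        * (tderiv u t x + Complex.I * (Φ t x : ℂ) * u t x)
      = covLap (A t) (u t) x
        + u t x / ((ε : ℂ)^2) * ((b x : ℂ) - (Complex.normSq (u t x) : ℂ))) ∧
  (∀ t : ℝ, ∀ x ∈ Ω, ∀ k : Fin 2,
    σ * (tderiv A t x k + grad (Φ t) x k)
      = gradPerp (fun y => curlV (A t) y) x k
        + cPair (Complex.I * u t x) (covGrad (A t) (u t) x k)) ∧
  (∀ t : ℝ, ∀ x ∈ frontier Ω, curlV (A t) x = absLog ε * H x) ∧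
  (∀ t : ℝ, ∀ x ∈ frontier Ω,
    dotCV (covGrad (A t) (u t) x) (ν x)
      = Complex.I * u t x * ((absLog ε * dotV (J x) (ν x) : ℝ) : ℂ))

/-- The four auxiliary boundary value problems for `φ₀, h₀, ξ₀, ψ₀`. -/
def AuxBVP (Ω : Set Pt) (ν : Pt → Vec) (b : Pt → ℝ) (α σ : ℝ) (H : Pt → ℝ) (J : Pt → Vec)
    (φ₀ h₀ ξ₀ ψ₀ : Pt → ℝ) : Prop :=
  ContDiff ℝ (⊤ : ℕ∞) φ₀ ∧ ContDiff ℝ (⊤ : ℕ∞) h₀ ∧ ContDiff ℝ (⊤ : ℕ∞) ξ₀ ∧ ContDiff ℝ (⊤ : ℕ∞) ψ₀ ∧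
  (∀ x ∈ Ω, -σ * lap φ₀ x + α * b x * φ₀ x = 0) ∧
  (∀ x ∈ frontier Ω, dotV (grad φ₀ x) (ν x)
      = σ⁻¹ * (b x * dotV (J x) (ν x) - dotV (grad H x) (perp (ν x)))) ∧
  (∀ x ∈ Ω, -divV (fun y k => grad h₀ y k / b y) x + h₀ x
      = -σ * dotV (gradPerp (fun y => 1 / b y) x) (grad φ₀ x)) ∧
  (∀ x ∈ frontier Ω, h₀ x = H x) ∧
  (∀ x ∈ Ω, lap ξ₀ x = h₀ x) ∧
  (∀ x ∈ frontier Ω, ξ₀ x = 0) ∧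
  (∀ x ∈ Ω, lap ψ₀ x
      = divV (fun y k => (σ * grad φ₀ y k - gradPerp h₀ y k) / b y) x) ∧
  (∀ x ∈ frontier Ω, dotV (grad ψ₀ x) (ν x) = dotV (J x) (ν x))

/-- The transformed Ginzburg–Landau system in the gauge `Φ_ε = |log ε|φ₀`. -/
def TransfSys (Ω : Set Pt) (ν : Pt → Vec) (b φ₀ : Pt → ℝ) (Z : Pt → Vec) (α β σ ε : ℝ)
    (v : ℝ → Pt → ℂ) (B : ℝ → Pt → Vec) : Prop :=
  (∀ t : ℝ, ∀ x ∈ Ω,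
    ((α : ℂ) + Complex.I * (absLog ε : ℂ) * (β : ℂ)) * tderiv v t x
      = covLap (B t) (v t) x
        + (b x : ℂ) * v t x / ((ε : ℂ)^2) * (1 - (Complex.normSq (v t x) : ℂ))
        + dotCV (covGrad (B t) (v t) x) (grad (fun y => Real.log (b y)) x)
        + 2 * Complex.I * (absLog ε : ℂ) * dotCV (covGrad (B t) (v t) x) (Z x)
        + v t x * (fEps b φ₀ Z β ε x : ℂ)) ∧
  (∀ t : ℝ, ∀ x ∈ Ω, ∀ k : Fin 2,
    σ * tderiv B t x k
      = gradPerp (fun y => curlV (B t) y) x k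
        + b x * cPair (Complex.I * v t x) (covGrad (B t) (v t) x k)
        + (Complex.normSq (v t x) - 1) * (b x * (absLog ε * Z x k))) ∧
  (∀ t : ℝ, ∀ x ∈ frontier Ω, curlV (B t) x = 0) ∧
  (∀ t : ℝ, ∀ x ∈ frontier Ω,
    dotCV (covGrad (B t) (v t) x) (ν x)
      = -(1/2) * v t x * ((dotV (grad (fun y => Real.log (b y)) x) (ν x) : ℝ) : ℂ))

/-- The stress-energy tensor `T_ε`. -/
def stressT (b fE : Pt → ℝ) (ε : ℝ) (v : Pt → ℂ) (B : Pt → Vec) (x : Pt)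
    (k l : Fin 2) : ℝ :=
  b x * cPair (covGrad B v x k) (covGrad B v x l)
  - (if k = l then
      (b x / 2 * normSqCV (covGrad B v x)
        + (b x)^2/(4*ε^2) * (1 - Complex.normSq (v x))^2
        - (1/2) * (curlV B x)^2
        - (Complex.normSq (v x) - 1)/2 * (b x * fE x))
    else 0)

/-- Energy density without pinning weight. -/
def eEps (ε : ℝ) (u : Pt → ℂ) (x : Pt) : ℝ :=
  (1/2) * normSqCV (gradC u x) + (1 - Complex.normSq (u x))^2 / (4*ε^2)

/-- Weighted energy density `ẽ_ε(u) = e^h(e_ε(u) + ((1−|u|²)/2) f_ε)`. -/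
def eTilde (h fE : Pt → ℝ) (ε : ℝ) (u : Pt → ℂ) (x : Pt) : ℝ :=
  Real.exp (h x) * (eEps ε u x + (1 - Complex.normSq (u x))/2 * fE x)

private lemma interp_closure {X Y Z : Type*} [NormedAddCommGroup X] [NormedSpace ℝ X]
    [NormedAddCommGroup Y] [NormedSpace ℝ Y] [NormedAddCommGroup Z] [NormedSpace ℝ Z]
    (i : X →L[ℝ] Y) (j : Y →L[ℝ] Z) {C θ : ℝ} (hC : 0 < C) (hθ : θ ∈ Set.Ioo (0:ℝ) 1)
    (hinterp : ∀ x : X, ‖i x‖ ≤ C * ‖x‖ ^ (1 - θ) * ‖j (i x)‖ ^ θ)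
    {R R' : ℝ} {y y' : Y} (hy : y ∈ closure (i '' Metric.closedBall 0 R))
    (hy' : y' ∈ closure (i '' Metric.closedBall 0 R')) :
    ‖y - y'‖ ≤ C * (R + R') ^ (1 - θ) * ‖j y - j y'‖ ^ θ := by
  obtain ⟨hθ0, hθ1⟩ := hθ
  set S : Set (Y × Y) := {p | ‖p.1 - p.2‖ ≤ C * (R + R') ^ (1 - θ) * ‖j p.1 - j p.2‖ ^ θ}
    with hS
  have hSclosed : IsClosed S := by
    apply isClosed_le
    · exact (continuous_fst.sub continuous_snd).norm
    · exact (continuous_const.mul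
        (Real.continuous_rpow_const hθ0.le |>.comp
          ((j.continuous.comp continuous_fst).sub (j.continuous.comp continuous_snd)).norm))
  have hbase : (i '' Metric.closedBall 0 R) ×ˢ (i '' Metric.closedBall 0 R') ⊆ S := by
    rintro ⟨-, -⟩ ⟨⟨x, hx, rfl⟩, ⟨x', hx', rfl⟩⟩
    simp only [Metric.mem_closedBall, dist_zero_right] at hx hx'
    show ‖i x - i x'‖ ≤ C * (R + R') ^ (1 - θ) * ‖j (i x) - j (i x')‖ ^ θ
    have h1 := hinterp (x - x')
    simp only [map_sub] at h1
    refine le_trans h1 ?_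
    have hxx : ‖x - x'‖ ≤ R + R' := (norm_sub_le _ _).trans (add_le_add hx hx')
    have hj : (0:ℝ) ≤ ‖j (i x) - j (i x')‖ ^ θ := Real.rpow_nonneg (norm_nonneg _) _
    have h2 : ‖x - x'‖ ^ (1 - θ) ≤ (R + R') ^ (1 - θ) :=
      Real.rpow_le_rpow (norm_nonneg _) hxx (by linarith)
    exact mul_le_mul_of_nonneg_right (mul_le_mul_of_nonneg_left h2 hC.le) hj
  have : (y, y') ∈ closure ((i '' Metric.closedBall 0 R) ×ˢ (i '' Metric.closedBall 0 R')) := by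
    rw [closure_prod_eq]; exact ⟨hy, hy'⟩
  exact hSclosed.closure_subset_iff.mpr hbase this

/-- Aubin–Lions–Simon compactness lemma: a set bounded in
`L^{p₁}([0,T];𝕏)` and in `W^{1,p₂}([0,T];ℤ)` is precompact in `L^p([0,T];𝕐)`
for `p ≤ p₁/(1−θ)`, when `𝕏 ⋐ 𝕐 ↪ ℤ` with the interpolation inequality. -/
theorem stmt12
    {X Y Z : Type*} [NormedAddCommGroup X] [NormedSpace ℝ X] [CompleteSpace X]
    [NormedAddCommGroup Y] [NormedSpace ℝ Y] [CompleteSpace Y]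
    [NormedAddCommGroup Z] [NormedSpace ℝ Z] [CompleteSpace Z]
    (i : X →L[ℝ] Y) (j : Y →L[ℝ] Z)
    (hcompact : ∀ s : Set X, Bornology.IsBounded s → IsCompact (closure (i '' s)))
    (C : ℝ) (hC : 0 < C) (θ : ℝ) (hθ : θ ∈ Set.Ioo (0:ℝ) 1)
    (hinterp : ∀ x : X, ‖i x‖ ≤ C * ‖x‖ ^ (1 - θ) * ‖j (i x)‖ ^ θ)
    (p₁ p₂ p : ℝ≥0∞) (hp₁ : 1 < p₁) (hp₂ : 1 < p₂)
    (hp : p ≤ p₁ / ENNReal.ofReal (1 - θ))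
    (T : ℝ) (hT : 0 < T)
    (F : Set (ℝ → X)) (M : ℝ≥0∞) (hM : M ≠ ⊤)
    (hbound : ∀ u ∈ F, eLpNorm u p₁ (volume.restrict (Set.Icc 0 T)) ≤ M)
    (hderiv : ∀ u ∈ F, ∃ g : ℝ → Z,
      AEStronglyMeasurable g (volume.restrict (Set.Icc 0 T)) ∧
      eLpNorm g p₂ (volume.restrict (Set.Icc 0 T)) ≤ M ∧
      ∀ t ∈ Set.Icc (0:ℝ) T, j (i (u t)) = j (i (u 0)) + ∫ s in (0:ℝ)..t, g s) :
    ∀ u : ℕ → ℝ → X, (∀ m, u m ∈ F) →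
      ∃ φ : ℕ → ℕ, StrictMono φ ∧ ∃ w : ℝ → Y,
        Tendsto
          (fun m => eLpNorm (fun t => i (u (φ m) t) - w t) p (volume.restrict (Set.Icc 0 T)))
          atTop (𝓝 0) := by
  intro u hu
  classical
  obtain ⟨hθ0, hθ1⟩ := hθ
  have h1θ : (0:ℝ) < 1 - θ := by linarith
  set μ : Measure ℝ := volume.restrict (Set.Icc 0 T) with hμdef
  have hμuniv : μ Set.univ = ENNReal.ofReal T := by
    rw [hμdef, Measure.restrict_apply_univ, Real.volume_Icc, sub_zero]
  choose g hgmeas hgbd hgeq using fun m => hderiv (u m) (hu m)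
  -- the compact sets K R and basic interpolation facts
  set K : ℝ → Set Y := fun R => closure (i '' Metric.closedBall 0 R) with hKdef
  have hKcomp : ∀ R, IsCompact (K R) := fun R => hcompact _ Metric.isBounded_closedBall
  have hKmono : ∀ {R R' : ℝ}, R ≤ R' → K R ⊆ K R' := fun h =>
    closure_mono (Set.image_mono (Metric.closedBall_subset_closedBall h))
  have hiK : ∀ x : X, i x ∈ K ‖x‖ :=
    fun x => subset_closure ⟨x, by simp [Metric.mem_closedBall], rfl⟩
  have hinterpK : ∀ {R R' : ℝ} {y y' : Y}, y ∈ K R → y' ∈ K R' →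
      ‖y - y'‖ ≤ C * (R + R') ^ (1 - θ) * ‖j y - j y'‖ ^ θ := by
    intro R R' y y' hy hy'
    exact interp_closure i j hC ⟨hθ0, hθ1⟩ hinterp hy hy'
  have hKinj : ∀ {R R' : ℝ} {y y' : Y}, y ∈ K R → y' ∈ K R' → j y = j y' → y = y' := by
    intro R R' y y' hy hy' hjj
    have h1 := hinterpK hy hy'
    rw [hjj, sub_self, norm_zero, Real.zero_rpow (ne_of_gt hθ0), mul_zero] at h1
    rw [← sub_eq_zero, ← norm_le_zero_iff]
    exact h1
  -- the functions z m
  set z : ℕ → ℝ → Z := fun m t => j (i (u m t)) with hzdef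
  -- integrability of g
  have hgint : ∀ m, IntegrableOn (g m) (Set.Icc 0 T) volume := by
    intro m
    have hmem : MemLp (g m) p₂ μ := ⟨hgmeas m, lt_of_le_of_lt (hgbd m) hM.lt_top⟩
    exact hmem.integrable hp₂.le
  have hgII : ∀ m (a b : ℝ), a ∈ Set.Icc 0 T → b ∈ Set.Icc 0 T →
      IntervalIntegrable (g m) volume a b := by
    intro m a b ha hb
    rw [intervalIntegrable_iff]
    exact (hgint m).mono_set (Set.uIoc_subset_uIcc.trans (Set.uIcc_subset_Icc ha hb))
  -- z m t - z m s = ∫ s..t g m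
  have hzdiff : ∀ m {s t : ℝ}, s ∈ Set.Icc 0 T → t ∈ Set.Icc 0 T →
      z m t - z m s = ∫ τ in s..t, g m τ := by
    intro m s t hs ht
    have h0 : (0:ℝ) ∈ Set.Icc 0 T := Set.left_mem_Icc.mpr hT.le
    rw [hzdef]
    simp only
    rw [hgeq m t ht, hgeq m s hs, add_sub_add_left_eq_sub]
    exact intervalIntegral.integral_interval_sub_left (hgII m 0 t h0 ht) (hgII m 0 s h0 hs)
  -- Hölder continuity exponent
  set e₂ : ℝ := 1 - 1 / p₂.toReal with he₂def
  have he₂pos : 0 < e₂ := by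
    rcases eq_or_ne p₂ ∞ with h | h
    · rw [he₂def, h]; norm_num
    · have : 1 < p₂.toReal := by
        rw [← ENNReal.toReal_one]
        exact ENNReal.toReal_strict_mono h hp₂
      rw [he₂def]
      have : 1 / p₂.toReal < 1 := by
        rw [div_lt_one (by linarith)]; linarith
      linarith
  have hzH : ∀ m {s t : ℝ}, s ∈ Set.Icc 0 T → t ∈ Set.Icc 0 T → s ≤ t →
      (‖z m t - z m s‖₊ : ℝ≥0∞) ≤ M * ENNReal.ofReal (t - s) ^ e₂ := by
    intro m s t hs ht hst
    have hsub : Set.Ioc s t ⊆ Set.Icc 0 T :=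
      Set.Ioc_subset_Icc_self.trans (Set.Icc_subset_Icc hs.1 ht.2)
    have hmle : volume.restrict (Set.Ioc s t) ≤ μ := by
      rw [hμdef]
      exact Measure.restrict_mono hsub le_rfl
    rw [hzdiff m hs ht, intervalIntegral.integral_of_le hst]
    calc (‖∫ τ in Set.Ioc s t, g m τ‖₊ : ℝ≥0∞)
        ≤ ∫⁻ τ in Set.Ioc s t, ‖g m τ‖₊ ∂volume :=
          enorm_integral_le_lintegral_enorm _
      _ = eLpNorm (g m) 1 (volume.restrict (Set.Ioc s t)) := by
          exact (eLpNorm_one_eq_lintegral_enorm (f := g m)).symm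
      _ ≤ eLpNorm (g m) p₂ (volume.restrict (Set.Ioc s t)) *
            (volume.restrict (Set.Ioc s t)) Set.univ ^ (1 / (1:ℝ≥0∞).toReal - 1 / p₂.toReal) :=
          eLpNorm_le_eLpNorm_mul_rpow_measure_univ hp₂.le ((hgmeas m).mono_measure hmle)
      _ ≤ M * ENNReal.ofReal (t - s) ^ e₂ := by
          rw [Measure.restrict_apply_univ, Real.volume_Ioc]
          have h1 : eLpNorm (g m) p₂ (volume.restrict (Set.Ioc s t)) ≤ M :=
            (eLpNorm_mono_measure _ hmle).trans (hgbd m)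
          have h2 : (1 / (1:ℝ≥0∞).toReal - 1 / p₂.toReal) = e₂ := by
            rw [he₂def, ENNReal.toReal_one]; norm_num
          rw [h2]
          exact mul_le_mul' h1 le_rfl
  have hzH' : ∀ m {s t : ℝ}, s ∈ Set.Icc 0 T → t ∈ Set.Icc 0 T →
      (‖z m t - z m s‖₊ : ℝ≥0∞) ≤ M * ENNReal.ofReal |t - s| ^ e₂ := by
    intro m s t hs ht
    rcases le_total s t with h | h
    · rw [abs_of_nonneg (by linarith)]; exact hzH m hs ht h
    · rw [abs_of_nonpos (by linarith), neg_sub, ← nnnorm_neg, neg_sub]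
      exact hzH m ht hs h
  -- good points
  have hgood : ∀ ε : ℝ, 0 < ε → ∃ R : ℝ, 1 ≤ R ∧ ∀ m, ∀ t ∈ Set.Icc 0 T,
      ∃ t' ∈ Set.Icc 0 T, |t' - t| ≤ ε ∧ ‖u m t'‖ ≤ R := by
    intro ε hε
    set ℓ : ℝ := min ε T with hℓdef
    have hℓ0 : 0 < ℓ := lt_min hε hT
    have hℓT : ℓ ≤ T := min_le_right _ _
    have hℓε : ℓ ≤ ε := min_le_left _ _
    -- the window around t
    have hwin : ∀ t ∈ Set.Icc (0:ℝ) T, ∃ a, 0 ≤ a ∧ a + ℓ ≤ T ∧ t ∈ Set.Icc a (a + ℓ) := by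
      intro t ht
      refine ⟨min t (T - ℓ), le_min ht.1 (by linarith), ?_, min_le_left _ _, ?_⟩
      · have : min t (T - ℓ) ≤ T - ℓ := min_le_right _ _
        linarith
      · rcases le_total t (T - ℓ) with h | h
        · rw [min_eq_left h]; linarith
        · rw [min_eq_right h]; linarith [ht.2]
    have hIccsub : ∀ a : ℝ, 0 ≤ a → a + ℓ ≤ T → Set.Icc a (a + ℓ) ⊆ Set.Icc 0 T :=
      fun a h1 h2 => Set.Icc_subset_Icc h1 h2
    have hμI : ∀ a : ℝ, 0 ≤ a → a + ℓ ≤ T → μ (Set.Icc a (a + ℓ)) = ENNReal.ofReal ℓ := by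
      intro a h1 h2
      rw [hμdef, Measure.restrict_apply measurableSet_Icc,
        Set.inter_eq_self_of_subset_left (hIccsub a h1 h2), Real.volume_Icc, add_sub_cancel_left]
    rcases eq_or_ne p₁ ∞ with hp₁top | hp₁top
    · -- p₁ = ∞
      refine ⟨max 1 (M.toReal + 1), le_max_left _ _, ?_⟩
      intro m t ht
      obtain ⟨a, ha0, haT, htw⟩ := hwin t ht
      have hae : ∀ᵐ τ ∂μ, (‖u m τ‖₊ : ℝ≥0∞) ≤ M := by
        have h1 := hbound (u m) (hu m)
        rw [hp₁top, eLpNorm_exponent_top] at h1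
        exact (ae_le_eLpNormEssSup (f := u m) (μ := μ)).mono fun τ hτ => hτ.trans h1
      have hae2 : ∀ᵐ τ ∂(μ.restrict (Set.Icc a (a + ℓ))), (‖u m τ‖₊ : ℝ≥0∞) ≤ M :=
        ae_restrict_of_ae hae
      have hae3 : ∀ᵐ τ ∂(μ.restrict (Set.Icc a (a + ℓ))), τ ∈ Set.Icc a (a + ℓ) :=
        ae_restrict_mem measurableSet_Icc
      have hne : μ.restrict (Set.Icc a (a + ℓ)) ≠ 0 := by
        rw [← Measure.measure_univ_eq_zero.ne]
        rw [Measure.restrict_apply_univ, hμI a ha0 haT]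
        simp [ne_eq, ENNReal.ofReal_eq_zero, not_le, hℓ0]
      haveI : (ae (μ.restrict (Set.Icc a (a + ℓ)))).NeBot := ae_neBot.mpr hne
      obtain ⟨τ, hτbd, hτmem⟩ := (hae2.and hae3).exists
      refine ⟨τ, hIccsub a ha0 haT hτmem, ?_, ?_⟩
      · rw [abs_sub_le_iff]
        constructor <;> [skip; skip] <;>
          · obtain ⟨h1, h2⟩ := hτmem; obtain ⟨h3, h4⟩ := htw; linarith
      · have : ‖u m τ‖ ≤ M.toReal := by
          rw [← enorm_eq_nnnorm, ← ofReal_norm] at hτbd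
          calc ‖u m τ‖ = (ENNReal.ofReal ‖u m τ‖).toReal := by
                rw [ENNReal.toReal_ofReal (norm_nonneg _)]
            _ ≤ M.toReal := ENNReal.toReal_mono hM hτbd
        calc ‖u m τ‖ ≤ M.toReal + 1 := by linarith
          _ ≤ max 1 (M.toReal + 1) := le_max_right _ _
    · -- p₁ finite
      have hp₁0 : p₁ ≠ 0 := (zero_lt_one.trans hp₁).ne'
      set r₁ : ℝ := p₁.toReal with hr₁def
      have hr₁1 : 1 ≤ r₁ := by
        rw [hr₁def, ← ENNReal.toReal_one]
        exact ENNReal.toReal_mono hp₁top hp₁.le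
      have hr₁0 : 0 < r₁ := by linarith
      have hMr : M ^ r₁ ≠ ∞ := ENNReal.rpow_ne_top_of_nonneg hr₁0.le hM
      have hdiv : M ^ r₁ / ENNReal.ofReal ℓ ≠ ∞ :=
        (ENNReal.div_lt_top hMr (by simp [ENNReal.ofReal_eq_zero, not_le, hℓ0])).ne
      obtain ⟨n, hn⟩ := ENNReal.exists_nat_gt hdiv
      refine ⟨max 1 (n : ℝ), le_max_left _ _, ?_⟩
      intro m t ht
      obtain ⟨a, ha0, haT, htw⟩ := hwin t ht
      by_contra hcon
      push_neg at hcon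
      have hbad : ∀ τ ∈ Set.Icc a (a + ℓ), max 1 (n:ℝ) < ‖u m τ‖ := by
        intro τ hτ
        refine hcon τ (hIccsub a ha0 haT hτ) ?_
        rw [abs_sub_le_iff]
        refine ⟨?_, ?_⟩ <;>
          · obtain ⟨h1, h2⟩ := hτ; obtain ⟨h3, h4⟩ := htw; linarith
      -- Chebyshev
      have hind : (Set.Icc a (a + ℓ)).indicator
          (fun _ => ENNReal.ofReal (max 1 (n:ℝ)) ^ r₁) ≤
          fun τ => (‖u m τ‖₊ : ℝ≥0∞) ^ r₁ := by
        intro τ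
        rcases Set.indicator_eq_zero_or_self _ (fun _ => ENNReal.ofReal (max 1 (n:ℝ)) ^ r₁) τ
          with h | h
        · rw [h]; exact zero_le
        · rw [h]
          by_cases hτ : τ ∈ Set.Icc a (a + ℓ)
          · refine ENNReal.rpow_le_rpow ?_ hr₁0.le
            rw [← enorm_eq_nnnorm, ← ofReal_norm]
            exact ENNReal.ofReal_le_ofReal (hbad τ hτ).le
          · rw [Set.indicator_of_notMem hτ] at h
            rw [← h]
            exact zero_le
      have h1 : ENNReal.ofReal (max 1 (n:ℝ)) ^ r₁ * ENNReal.ofReal ℓ ≤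
          ∫⁻ τ, (‖u m τ‖₊ : ℝ≥0∞) ^ r₁ ∂μ := by
        calc ENNReal.ofReal (max 1 (n:ℝ)) ^ r₁ * ENNReal.ofReal ℓ
            = ∫⁻ τ, (Set.Icc a (a + ℓ)).indicator
                (fun _ => ENNReal.ofReal (max 1 (n:ℝ)) ^ r₁) τ ∂μ := by
              rw [lintegral_indicator measurableSet_Icc, setLIntegral_const,
                hμI a ha0 haT]
          _ ≤ ∫⁻ τ, (‖u m τ‖₊ : ℝ≥0∞) ^ r₁ ∂μ := lintegral_mono hind
      have h2 : ∫⁻ τ, (‖u m τ‖₊ : ℝ≥0∞) ^ r₁ ∂μ ≤ M ^ r₁ := by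
        have heq : ∫⁻ τ, (‖u m τ‖₊ : ℝ≥0∞) ^ r₁ ∂μ = (eLpNorm (u m) p₁ μ) ^ r₁ := by
          rw [eLpNorm_eq_lintegral_rpow_enorm_toReal hp₁0 hp₁top, ← ENNReal.rpow_mul,
            one_div, inv_mul_cancel₀ hr₁0.ne', ENNReal.rpow_one]; rfl
        rw [heq]
        exact ENNReal.rpow_le_rpow (hbound (u m) (hu m)) hr₁0.le
      -- contradiction
      have h3 : (n : ℝ≥0∞) * ENNReal.ofReal ℓ ≤ M ^ r₁ := by
        refine le_trans (mul_le_mul' ?_ le_rfl) (h1.trans h2)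
        calc (n : ℝ≥0∞) = ENNReal.ofReal (n : ℝ) := by
              rw [ENNReal.ofReal_natCast]
          _ ≤ ENNReal.ofReal (max 1 (n:ℝ)) := ENNReal.ofReal_le_ofReal (le_max_right _ _)
          _ = ENNReal.ofReal (max 1 (n:ℝ)) ^ (1:ℝ) := by rw [ENNReal.rpow_one]
          _ ≤ ENNReal.ofReal (max 1 (n:ℝ)) ^ r₁ := by
              refine ENNReal.rpow_le_rpow_of_exponent_le ?_ hr₁1
              simp [ENNReal.one_le_ofReal, le_max_left]
        done
      have h4 : M ^ r₁ < (n : ℝ≥0∞) * ENNReal.ofReal ℓ := by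
        rw [← ENNReal.div_lt_iff (Or.inl (by simp [ENNReal.ofReal_eq_zero, not_le, hℓ0]))
          (Or.inl ENNReal.ofReal_ne_top)]
        exact hn
      exact absurd h3 (not_le.mpr h4)
  -- small increments uniformly
  have hsmall : ∀ ε : ℝ, 0 < ε → ∃ δ : ℝ, 0 < δ ∧
      M * ENNReal.ofReal δ ^ e₂ < ENNReal.ofReal ε := by
    intro ε hε
    have h1 : Tendsto (fun d : ℝ => ENNReal.ofReal d) (𝓝[>] (0:ℝ)) (𝓝 0) := by
      rw [← ENNReal.ofReal_zero]
      exact (ENNReal.continuous_ofReal.tendsto 0).comp nhdsWithin_le_nhds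
    have h2 : Tendsto (fun d : ℝ => ENNReal.ofReal d ^ e₂) (𝓝[>] (0:ℝ)) (𝓝 0) := by
      have h3 := (ENNReal.continuous_rpow_const (y := e₂)).tendsto 0
      rw [ENNReal.zero_rpow_of_pos he₂pos] at h3
      exact h3.comp h1
    have h4 : Tendsto (fun d : ℝ => M * ENNReal.ofReal d ^ e₂) (𝓝[>] (0:ℝ)) (𝓝 0) := by
      have := ENNReal.Tendsto.const_mul h2 (Or.inr hM)
      rwa [mul_zero] at this
    have h5 : ∀ᶠ d in 𝓝[>] (0:ℝ), M * ENNReal.ofReal d ^ e₂ < ENNReal.ofReal ε :=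
      h4.eventually_lt_const (by simp [ENNReal.ofReal_pos, hε])
    obtain ⟨δ, hδ1, hδ2⟩ := (h5.and self_mem_nhdsWithin).exists
    exact ⟨δ, hδ2, hδ1⟩
  -- continuity of z m on Icc
  have hzcont : ∀ m, ContinuousOn (z m) (Set.Icc 0 T) := by
    intro m
    have h1 : ContinuousOn (fun t => ∫ τ in Set.Ioc 0 t, g m τ) (Set.Icc 0 T) :=
      intervalIntegral.continuousOn_primitive (hgint m)
    have h2 : Set.EqOn (z m) (fun t => j (i (u m 0)) + ∫ τ in Set.Ioc 0 t, g m τ)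
        (Set.Icc 0 T) := by
      intro t ht
      rw [hzdef]
      simp only
      rw [hgeq m t ht, intervalIntegral.integral_of_le ht.1]
    exact (continuousOn_const.add h1).congr h2
  -- total boundedness of the set of values
  have hSStb : TotallyBounded (⋃ m : ℕ, z m '' Set.Icc 0 T) := by
    rw [Metric.totallyBounded_iff]
    intro ε hε
    obtain ⟨δ, hδ0, hδ⟩ := hsmall (ε/2) (by linarith)
    obtain ⟨R, hR1, hRgood⟩ := hgood δ hδ0
    have hjK : IsCompact (j '' K R) := (hKcomp R).image j.continuous
    obtain ⟨net, hnetfin, hnetcov⟩ := Metric.totallyBounded_iff.mp hjK.totallyBounded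
      (ε/2) (by linarith)
    refine ⟨net, hnetfin, ?_⟩
    rintro ζ hζ
    rw [Set.mem_iUnion] at hζ
    obtain ⟨m, t, ht, rfl⟩ := hζ
    obtain ⟨t', ht'I, ht'd, ht'R⟩ := hRgood m t ht
    have h1 : dist (z m t) (z m t') < ε/2 := by
      have hb : (‖z m t - z m t'‖₊ : ℝ≥0∞) ≤ M * ENNReal.ofReal |t - t'| ^ e₂ :=
        hzH' m ht'I ht
      have hb2 : M * ENNReal.ofReal |t - t'| ^ e₂ ≤ M * ENNReal.ofReal δ ^ e₂ := by
        refine mul_le_mul' le_rfl (ENNReal.rpow_le_rpow (ENNReal.ofReal_le_ofReal ?_) he₂pos.le)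
        rw [abs_sub_comm]; exact ht'd
      have hb3 : ENNReal.ofReal ‖z m t - z m t'‖ < ENNReal.ofReal (ε/2) := by
        rw [ofReal_norm, enorm_eq_nnnorm]
        exact lt_of_le_of_lt (hb.trans hb2) hδ
      rw [dist_eq_norm]
      exact (ENNReal.ofReal_lt_ofReal_iff (by linarith)).mp hb3
    have h2 : z m t' ∈ j '' K R := ⟨i (u m t'), hKmono ht'R (hiK _), rfl⟩
    have h3 := hnetcov h2
    rw [Set.mem_iUnion₂] at h3
    obtain ⟨y, hy, hdy⟩ := h3
    rw [Set.mem_iUnion₂]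
    refine ⟨y, hy, ?_⟩
    rw [Metric.mem_ball] at hdy ⊢
    calc dist (z m t) y ≤ dist (z m t) (z m t') + dist (z m t') y := dist_triangle _ _ _
      _ < ε/2 + ε/2 := by exact add_lt_add h1 hdy
      _ = ε := by ring
  have hSSc : IsCompact (closure (⋃ m : ℕ, z m '' Set.Icc 0 T)) :=
    hSStb.closure.isCompact_of_isClosed isClosed_closure
  -- Arzelà–Ascoli
  haveI : CompactSpace (Set.Icc (0:ℝ) T) := isCompact_iff_compactSpace.mp isCompact_Icc
  set ZB : ℕ → BoundedContinuousFunction ↥(Set.Icc (0:ℝ) T) Z := fun m =>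
    BoundedContinuousFunction.mkOfCompact ⟨(Set.Icc (0:ℝ) T).restrict (z m), (hzcont m).restrict⟩
    with hZBdef
  have hZBval : ∀ m (x : Set.Icc (0:ℝ) T), ZB m x = z m x := fun m x => rfl
  have hdistlt : ∀ (δ ε : ℝ), M * ENNReal.ofReal δ ^ e₂ < ENNReal.ofReal ε →
      ∀ m (s t : ℝ), s ∈ Set.Icc 0 T → t ∈ Set.Icc 0 T → |t - s| ≤ δ →
      dist (z m t) (z m s) < ε := by
    intro δ ε hδ m s t hs ht hd
    have hε0 : 0 < ε := by
      by_contra hc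
      push_neg at hc
      rw [ENNReal.ofReal_eq_zero.mpr hc] at hδ
      exact (not_lt_of_ge (zero_le)) hδ
    have hb : (‖z m t - z m s‖₊ : ℝ≥0∞) ≤ M * ENNReal.ofReal |t - s| ^ e₂ := hzH' m hs ht
    have hb2 : M * ENNReal.ofReal |t - s| ^ e₂ ≤ M * ENNReal.ofReal δ ^ e₂ :=
      mul_le_mul' le_rfl (ENNReal.rpow_le_rpow (ENNReal.ofReal_le_ofReal hd) he₂pos.le)
    have hb3 : ENNReal.ofReal ‖z m t - z m s‖ < ENNReal.ofReal ε := by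
      rw [ofReal_norm, enorm_eq_nnnorm]
      exact lt_of_le_of_lt (hb.trans hb2) hδ
    rw [dist_eq_norm]
    exact (ENNReal.ofReal_lt_ofReal_iff hε0).mp hb3
  have hAA : IsCompact (closure (Set.range ZB)) := by
    refine BoundedContinuousFunction.arzela_ascoli (closure (⋃ m : ℕ, z m '' Set.Icc 0 T)) hSSc
      (Set.range ZB) ?_ ?_
    · rintro f x ⟨m, rfl⟩
      exact subset_closure (Set.mem_iUnion.mpr ⟨m, ⟨(x : ℝ), x.2, rfl⟩⟩)
    · refine UniformEquicontinuous.equicontinuous ?_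
      refine Metric.uniformEquicontinuous_iff.mpr ?_
      intro ε hε
      obtain ⟨δ, hδ0, hδ⟩ := hsmall ε hε
      refine ⟨δ, hδ0, ?_⟩
      intro a b hab f
      obtain ⟨m, hm⟩ := f.2
      rw [← hm]
      have hval : ∀ x : ↥(Set.Icc (0:ℝ) T), (ZB m) x = z m x := fun x => rfl
      rw [hval a, hval b]
      refine hdistlt δ ε hδ m (b : ℝ) (a : ℝ) b.2 a.2 ?_
      rw [← Real.dist_eq]
      exact (Subtype.dist_eq a b ▸ hab).le
  obtain ⟨Zl, hZlmem, φ, hφ, hconv⟩ :=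
    hAA.tendsto_subseq (fun m => subset_closure (Set.mem_range_self m))
  set δs : ℕ → ℝ := fun k => dist (ZB (φ k)) Zl with hδsdef
  have hδs0 : Tendsto δs atTop (𝓝 0) := tendsto_iff_dist_tendsto_zero.mp hconv
  have hδsnn : ∀ k, 0 ≤ δs k := fun k => dist_nonneg
  have hzconv : ∀ (t : ℝ) (ht : t ∈ Set.Icc 0 T) (k : ℕ),
      ‖z (φ k) t - Zl ⟨t, ht⟩‖ ≤ δs k := by
    intro t ht k
    rw [← dist_eq_norm]
    exact BoundedContinuousFunction.dist_coe_le_dist (f := ZB (φ k)) (g := Zl) ⟨t, ht⟩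
  -- clamped versions
  set cl : ℝ → ℝ := fun t => max 0 (min t T) with hcldef
  have hclmem : ∀ t, cl t ∈ Set.Icc 0 T :=
    fun t => ⟨le_max_left _ _, max_le hT.le (min_le_right _ _)⟩
  have hclcont : Continuous cl := continuous_const.max (continuous_id.min continuous_const)
  have hcleq : ∀ t ∈ Set.Icc 0 T, cl t = t := by
    intro t ht
    rw [hcldef]; simp only
    rw [min_eq_left ht.2, max_eq_right ht.1]
  set zc : ℕ → ℝ → Z := fun m t => z m (cl t) with hzcdef
  have hzccont : ∀ m, Continuous (zc m) := fun m =>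
    (hzcont m).comp_continuous hclcont hclmem
  -- the functions G m
  set Gs : ℕ → ℝ → Set ℝ := fun m t => {R : ℝ | 0 ≤ R ∧ zc m t ∈ j '' K R} with hGsdef
  have hGsne : ∀ m t, (Gs m t).Nonempty :=
    fun m t => ⟨‖u m (cl t)‖, norm_nonneg _, ⟨i (u m (cl t)), hiK _, rfl⟩⟩
  have hGsbdd : ∀ m t, BddBelow (Gs m t) := fun m t => ⟨0, fun R hR => hR.1⟩
  have hGsmono : ∀ m t {R R' : ℝ}, R ≤ R' → R ∈ Gs m t → R' ∈ Gs m t := by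
    intro m t R R' h hR
    exact ⟨hR.1.trans h, Set.image_mono (hKmono h) hR.2⟩
  set G : ℕ → ℝ → ℝ := fun m t => sInf (Gs m t) with hGdef
  have hG0 : ∀ m t, 0 ≤ G m t := fun m t => le_csInf (hGsne m t) (fun R hR => hR.1)
  have hGmem : ∀ m t (ε : ℝ), 0 < ε → zc m t ∈ j '' K (G m t + ε) := by
    intro m t ε hε
    obtain ⟨R, hR, hRlt⟩ := exists_lt_of_csInf_lt (hGsne m t) (lt_add_of_pos_right _ hε)
    exact (hGsmono m t hRlt.le hR).2
  have hGle : ∀ m (t : ℝ), t ∈ Set.Icc 0 T → G m t ≤ ‖u m t‖ := by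
    intro m t ht
    refine csInf_le (hGsbdd m t) ⟨norm_nonneg _, ?_⟩
    rw [hzcdef]; simp only [hcleq t ht]
    exact ⟨i (u m t), hiK _, rfl⟩
  have hjKclosed : ∀ R, IsClosed (j '' K R) := fun R =>
    ((hKcomp R).image j.continuous).isClosed
  have hKneg : ∀ {R : ℝ}, R < 0 → K R = ∅ := by
    intro R h
    rw [hKdef]
    simp only
    rw [Metric.closedBall_eq_empty.mpr h, Set.image_empty, closure_empty]
  have hGmeas : ∀ m, Measurable (G m) := by
    intro m
    apply measurable_of_Iic
    intro b
    have hkey : G m ⁻¹' (Set.Iic b) = ⋂ n : ℕ, (zc m) ⁻¹' (j '' K (b + 1/(n+1))) := by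
      ext t
      simp only [Set.mem_preimage, Set.mem_Iic, Set.mem_iInter]
      constructor
      · intro h n
        have hpos : (0:ℝ) < 1/((n:ℝ)+1) := by positivity
        have h1 := hGmem m t (1/((n:ℝ)+1)) hpos
        refine Set.image_mono (hKmono ?_) h1
        have : ((n:ℝ)+1) = ((n:ℕ):ℝ) + 1 := by norm_num
        linarith [h]
      · intro h
        refine le_of_forall_pos_le_add ?_
        intro ε hε
        obtain ⟨n, hn⟩ := exists_nat_one_div_lt hε
        have h1 : b + 1/((n:ℝ)+1) ∈ Gs m t := by
          have hmem := h n
          refine ⟨?_, hmem⟩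
          by_contra hc
          push_neg at hc
          rw [hKneg hc, Set.image_empty] at hmem
          exact hmem
        calc G m t ≤ b + 1/((n:ℝ)+1) := csInf_le (hGsbdd m t) h1
          _ ≤ b + ε := by linarith [hn]
    have : MeasurableSet (G m ⁻¹' (Set.Iic b)) := by
      rw [hkey]
      exact MeasurableSet.iInter fun n =>
        ((hjKclosed _).preimage (hzccont m)).measurableSet
    exact this
  -- membership of i (u m t) in K (G m t + 1)
  have hvK : ∀ m (t : ℝ), t ∈ Set.Icc 0 T → i (u m t) ∈ K (G m t + 1) := by
    intro m t ht
    obtain ⟨y, hyK, hyj⟩ := hGmem m t 1 one_pos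
    have hy2 : y = i (u m t) := by
      refine hKinj hyK (hiK (u m t)) ?_
      rw [hyj, hzcdef]; simp only [hcleq t ht]; rfl
    rwa [← hy2]
  have hμfin : μ Set.univ ≠ ∞ := by rw [hμuniv]; exact ENNReal.ofReal_ne_top
  -- liminf of G along the subsequence
  set L : ℝ → ℝ≥0∞ := fun t => Filter.liminf (fun k => ENNReal.ofReal (G (φ k) t)) Filter.atTop
    with hLdef
  have hGmeas' : ∀ m, Measurable (fun t => ENNReal.ofReal (G m t)) :=
    fun m => ENNReal.measurable_ofReal.comp (hGmeas m)
  have hLmeas : Measurable L := Measurable.liminf (fun k => hGmeas' (φ k))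
  -- definition of w
  set P : ℝ → Y → Prop := fun t y =>
    j y = Zl ⟨cl t, hclmem t⟩ ∧ y ∈ K ((L t).toReal + 2) with hPdef
  set w : ℝ → Y := fun t => if h : ∃ y, P t y then h.choose else 0 with hwdef
  have hwP : ∀ t, (∃ y, P t y) → P t (w t) := by
    intro t h
    rw [hwdef]
    simp only [dif_pos h]
    exact h.choose_spec
  have hwex : ∀ (t : ℝ), t ∈ Set.Icc 0 T → L t < ∞ → ∃ y, P t y := by
    intro t ht hLt
    have hfreq : ∃ᶠ k in atTop, ENNReal.ofReal (G (φ k) t) < L t + 1 :=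
      frequently_lt_of_liminf_lt (by isBoundedDefault)
        (ENNReal.lt_add_right hLt.ne one_ne_zero)
    obtain ⟨ψ, hψmono, hψ⟩ := Filter.extraction_of_frequently_atTop hfreq
    have hGψ : ∀ n, G (φ (ψ n)) t ≤ (L t).toReal + 1 := by
      intro n
      have h2 : ENNReal.ofReal (G (φ (ψ n)) t) < ENNReal.ofReal ((L t).toReal + 1) := by
        rw [ENNReal.ofReal_add ENNReal.toReal_nonneg zero_le_one, ENNReal.ofReal_toReal hLt.ne,
          ENNReal.ofReal_one]
        exact hψ n
      exact ((ENNReal.ofReal_lt_ofReal_iff_of_nonneg (hG0 _ _)).mp h2).le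
    have hseq : ∀ n, i (u (φ (ψ n)) t) ∈ K ((L t).toReal + 2) := by
      intro n
      refine hKmono ?_ (hvK (φ (ψ n)) t ht)
      linarith [hGψ n]
    obtain ⟨y, hyK, ψ₂, hψ₂, hyconv⟩ := (hKcomp _).tendsto_subseq hseq
    refine ⟨y, ?_, hyK⟩
    have hδsub : Tendsto (fun l => δs (ψ (ψ₂ l))) atTop (𝓝 0) :=
      hδs0.comp ((hψmono.comp hψ₂).tendsto_atTop)
    have h1 : Tendsto (fun l => z (φ (ψ (ψ₂ l))) t) atTop (𝓝 (Zl ⟨t, ht⟩)) := by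
      rw [tendsto_iff_dist_tendsto_zero]
      refine squeeze_zero (fun l => dist_nonneg) (fun l => ?_) hδsub
      rw [dist_eq_norm]
      exact hzconv t ht (ψ (ψ₂ l))
    have h2 : Tendsto (fun l => j (i (u (φ (ψ (ψ₂ l))) t))) atTop (𝓝 (j y)) :=
      (j.continuous.tendsto y).comp hyconv
    have h3 : j y = Zl ⟨t, ht⟩ := tendsto_nhds_unique h2 h1
    have h4 : (⟨cl t, hclmem t⟩ : ↥(Set.Icc (0:ℝ) T)) = ⟨t, ht⟩ := Subtype.ext (hcleq t ht)
    rw [h4, h3]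
  -- the key pointwise bound
  have hkey : ∀ (k : ℕ) (t : ℝ), t ∈ Set.Icc 0 T → L t < ∞ →
      (‖i (u (φ k) t) - w t‖₊ : ℝ≥0∞) ≤
        ENNReal.ofReal C * (ENNReal.ofReal (G (φ k) t) + L t + 3) ^ (1 - θ) *
          ENNReal.ofReal (δs k) ^ θ := by
    intro k t ht hLt
    obtain ⟨hwj, hwK⟩ := hwP t (hwex t ht hLt)
    have hbd := hinterpK (hvK (φ k) t ht) hwK
    have h2 : ‖j (i (u (φ k) t)) - j (w t)‖ ≤ δs k := by
      rw [hwj]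
      have h4 : (⟨cl t, hclmem t⟩ : ↥(Set.Icc (0:ℝ) T)) = ⟨t, ht⟩ := Subtype.ext (hcleq t ht)
      rw [h4]
      exact hzconv t ht k
    have hbase : (0:ℝ) ≤ (G (φ k) t + 1) + ((L t).toReal + 2) := by
      have h5 := hG0 (φ k) t
      have h6 := ENNReal.toReal_nonneg (a := L t)
      linarith
    have h5 : ‖i (u (φ k) t) - w t‖ ≤
        C * ((G (φ k) t + 1) + ((L t).toReal + 2)) ^ (1 - θ) * (δs k) ^ θ := by
      refine hbd.trans ?_
      have h6 : ‖j (i (u (φ k) t)) - j (w t)‖ ^ θ ≤ (δs k) ^ θ :=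
        Real.rpow_le_rpow (norm_nonneg _) h2 hθ0.le
      exact mul_le_mul_of_nonneg_left h6
        (mul_nonneg hC.le (Real.rpow_nonneg hbase _))
    have h6 : (‖i (u (φ k) t) - w t‖₊ : ℝ≥0∞) ≤
        ENNReal.ofReal (C * ((G (φ k) t + 1) + ((L t).toReal + 2)) ^ (1 - θ) * (δs k) ^ θ) := by
      rw [← enorm_eq_nnnorm, ← ofReal_norm]
      exact ENNReal.ofReal_le_ofReal h5
    refine h6.trans ?_
    rw [ENNReal.ofReal_mul (mul_nonneg hC.le (Real.rpow_nonneg hbase _)),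
      ENNReal.ofReal_mul hC.le,
      ← ENNReal.ofReal_rpow_of_nonneg hbase h1θ.le,
      ← ENNReal.ofReal_rpow_of_nonneg (hδsnn k) hθ0.le]
    refine mul_le_mul' (mul_le_mul' le_rfl ?_) le_rfl
    refine ENNReal.rpow_le_rpow ?_ h1θ.le
    rw [show (G (φ k) t + 1) + ((L t).toReal + 2) = G (φ k) t + ((L t).toReal + 3) by ring]
    rw [ENNReal.ofReal_add (hG0 _ _) (by positivity),
      ENNReal.ofReal_add ENNReal.toReal_nonneg (by norm_num : (0:ℝ) ≤ 3)]
    rw [← add_assoc]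
    refine add_le_add (add_le_add le_rfl ENNReal.ofReal_toReal_le) ?_
    simp
  -- auxiliary pointwise inequalities in ℝ≥0∞
  have haux2 : ∀ (x : ℝ≥0∞) (q r : ℝ), 0 ≤ q → q ≤ r → x ^ q ≤ 1 + x ^ r := by
    intro x q r hq hqr
    rcases le_total x 1 with h | h
    · calc x ^ q ≤ 1 ^ q := ENNReal.rpow_le_rpow h hq
        _ = 1 := ENNReal.one_rpow q
        _ ≤ 1 + x ^ r := self_le_add_right _ _
    · calc x ^ q ≤ x ^ r := ENNReal.rpow_le_rpow_of_exponent_le h hqr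
        _ ≤ 1 + x ^ r := self_le_add_left _ _
  have haux1 : ∀ (a b c : ℝ≥0∞) (q : ℝ), 0 ≤ q →
      (a + b + c) ^ q ≤ (3:ℝ≥0∞) ^ q * (a ^ q + b ^ q + c ^ q) := by
    intro a b c q hq
    have hmono : Monotone (fun x : ℝ≥0∞ => x ^ q) := fun x y h => ENNReal.rpow_le_rpow h hq
    have hm : a + b + c ≤ 3 * (a ⊔ b ⊔ c) := by
      have ha : a ≤ a ⊔ b ⊔ c := le_sup_of_le_left le_sup_left
      have hb : b ≤ a ⊔ b ⊔ c := le_sup_of_le_left le_sup_right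
      have hc : c ≤ a ⊔ b ⊔ c := le_sup_right
      calc a + b + c ≤ (a ⊔ b ⊔ c) + (a ⊔ b ⊔ c) + (a ⊔ b ⊔ c) :=
            add_le_add (add_le_add ha hb) hc
        _ = 3 * (a ⊔ b ⊔ c) := by ring
    calc (a + b + c) ^ q ≤ (3 * (a ⊔ b ⊔ c)) ^ q := ENNReal.rpow_le_rpow hm hq
      _ = 3 ^ q * (a ⊔ b ⊔ c) ^ q := ENNReal.mul_rpow_of_nonneg _ _ hq
      _ ≤ 3 ^ q * (a ^ q + b ^ q + c ^ q) := by
          refine mul_le_mul' le_rfl ?_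
          have h1 := hmono.map_sup (a ⊔ b) c
          have h2 := hmono.map_sup a b
          rw [h1, h2]
          refine sup_le (sup_le ?_ ?_) ?_
          · exact (self_le_add_right _ _).trans (self_le_add_right _ _)
          · exact (self_le_add_left _ _).trans (self_le_add_right _ _)
          · exact self_le_add_left _ _
  -- case p = 0
  rcases eq_or_ne p 0 with hp0 | hp0
  · refine ⟨φ, hφ, w, ?_⟩
    have : ∀ k, eLpNorm (fun t => i (u (φ k) t) - w t) p μ = 0 := by
      intro k
      rw [hp0, eLpNorm_exponent_zero]
    simp only [this]
    exact tendsto_const_nhds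
  -- case p = ∞
  rcases eq_or_ne p ∞ with hptop | hptop
  · have h1θne : ENNReal.ofReal (1 - θ) ≠ 0 := by
      simp only [ne_eq, ENNReal.ofReal_eq_zero, not_le]
      linarith
    have hp₁top : p₁ = ∞ := by
      by_contra hch
      have hne : p₁ / ENNReal.ofReal (1 - θ) ≠ ∞ := by
        rw [Ne, ENNReal.div_eq_top]
        push_neg
        exact ⟨fun _ => h1θne, fun h => absurd h hch⟩
      rw [hptop] at hp
      exact hne (top_le_iff.mp hp)
    have hGM : ∀ᵐ t ∂μ, ∀ k : ℕ, ENNReal.ofReal (G (φ k) t) ≤ M := by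
      rw [ae_all_iff]
      intro k
      have h1 := hbound (u (φ k)) (hu (φ k))
      rw [hp₁top, eLpNorm_exponent_top] at h1
      filter_upwards [ae_restrict_mem measurableSet_Icc,
        ae_le_eLpNormEssSup (f := u (φ k)) (μ := μ)] with t ht h2
      calc ENNReal.ofReal (G (φ k) t) ≤ (‖u (φ k) t‖₊ : ℝ≥0∞) := by
            rw [← enorm_eq_nnnorm, ← ofReal_norm]
            exact ENNReal.ofReal_le_ofReal (hGle (φ k) t ht)
        _ ≤ M := h2.trans h1
    have hLM : ∀ᵐ t ∂μ, L t ≤ M := by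
      filter_upwards [hGM] with t hGt
      calc L t ≤ Filter.liminf (fun _ : ℕ => M) atTop :=
            Filter.liminf_le_liminf (Filter.Eventually.of_forall hGt)
        _ = M := Filter.liminf_const _
    have hLfin : ∀ᵐ t ∂μ, L t < ∞ := hLM.mono fun t h => lt_of_le_of_lt h hM.lt_top
    have hcne : ENNReal.ofReal C * (M + M + 3) ^ (1 - θ) ≠ ∞ :=
      ENNReal.mul_ne_top ENNReal.ofReal_ne_top
        (ENNReal.rpow_ne_top_of_nonneg h1θ.le
          (by simp [ENNReal.add_eq_top, hM]))
    have hest : ∀ k, eLpNorm (fun t => i (u (φ k) t) - w t) p μ ≤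
        ENNReal.ofReal C * (M + M + 3) ^ (1 - θ) * ENNReal.ofReal (δs k) ^ θ := by
      intro k
      rw [hptop, eLpNorm_exponent_top]
      refine essSup_le_of_ae_le _ ?_
      filter_upwards [ae_restrict_mem measurableSet_Icc, hGM, hLM, hLfin]
        with t ht hGt hLt hLf
      refine (hkey k t ht hLf).trans ?_
      refine mul_le_mul' (mul_le_mul' le_rfl ?_) le_rfl
      refine ENNReal.rpow_le_rpow ?_ h1θ.le
      exact add_le_add (add_le_add (hGt k) hLt) le_rfl
    refine ⟨φ, hφ, w, ?_⟩
    have h1 : Tendsto (fun k => ENNReal.ofReal (δs k)) atTop (𝓝 0) := by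
      rw [← ENNReal.ofReal_zero]
      exact (ENNReal.continuous_ofReal.tendsto 0).comp hδs0
    have h2 : Tendsto (fun k => ENNReal.ofReal (δs k) ^ θ) atTop (𝓝 0) := by
      have h3 := (ENNReal.continuous_rpow_const (y := θ)).tendsto 0
      rw [ENNReal.zero_rpow_of_pos hθ0] at h3
      exact h3.comp h1
    have h4 := ENNReal.Tendsto.const_mul h2 (Or.inr hcne)
    rw [mul_zero] at h4
    exact tendsto_of_tendsto_of_tendsto_of_le_of_le tendsto_const_nhds h4
      (fun k => zero_le) hest
  -- case 0 < p < ∞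
  have hpr : 0 < p.toReal := ENNReal.toReal_pos hp0 hptop
  set pr : ℝ := p.toReal with hprdef
  set q : ℝ := (1 - θ) * pr with hqdef
  have hq0 : 0 ≤ q := by positivity
  obtain ⟨Kq, hKqne, hKq, hLfin⟩ : ∃ Kq : ℝ≥0∞, Kq ≠ ∞ ∧
      (∀ k, ∫⁻ t, (ENNReal.ofReal (G (φ k) t) + L t + 3) ^ q ∂μ ≤ Kq) ∧
      (∀ᵐ t ∂μ, L t < ∞) := by
    rcases eq_or_ne p₁ ∞ with hp₁top | hp₁top
    · -- p₁ = ∞ : everything bounded a.e. by M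
      have hGM : ∀ᵐ t ∂μ, ∀ k : ℕ, ENNReal.ofReal (G (φ k) t) ≤ M := by
        rw [ae_all_iff]
        intro k
        have h1 := hbound (u (φ k)) (hu (φ k))
        rw [hp₁top, eLpNorm_exponent_top] at h1
        filter_upwards [ae_restrict_mem measurableSet_Icc,
          ae_le_eLpNormEssSup (f := u (φ k)) (μ := μ)] with t ht h2
        calc ENNReal.ofReal (G (φ k) t) ≤ (‖u (φ k) t‖₊ : ℝ≥0∞) := by
              rw [← enorm_eq_nnnorm, ← ofReal_norm]
              exact ENNReal.ofReal_le_ofReal (hGle (φ k) t ht)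
          _ ≤ M := h2.trans h1
      have hLM : ∀ᵐ t ∂μ, L t ≤ M := by
        filter_upwards [hGM] with t hGt
        calc L t ≤ Filter.liminf (fun _ : ℕ => M) atTop :=
              Filter.liminf_le_liminf (Filter.Eventually.of_forall hGt)
          _ = M := Filter.liminf_const _
      have hMM3 : (M + M + 3 : ℝ≥0∞) ≠ ∞ := by simp [ENNReal.add_eq_top, hM]
      refine ⟨(M + M + 3) ^ q * μ Set.univ,
        ENNReal.mul_ne_top (ENNReal.rpow_ne_top_of_nonneg hq0 hMM3) hμfin, ?_,
        hLM.mono fun t h => lt_of_le_of_lt h hM.lt_top⟩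
      intro k
      have hb : ∀ᵐ t ∂μ, (ENNReal.ofReal (G (φ k) t) + L t + 3) ^ q ≤ (M + M + 3) ^ q := by
        filter_upwards [hGM, hLM] with t hGt hLt
        exact ENNReal.rpow_le_rpow (add_le_add (add_le_add (hGt k) hLt) le_rfl) hq0
      calc ∫⁻ t, (ENNReal.ofReal (G (φ k) t) + L t + 3) ^ q ∂μ
          ≤ ∫⁻ _, (M + M + 3) ^ q ∂μ := lintegral_mono_ae hb
        _ = (M + M + 3) ^ q * μ Set.univ := lintegral_const _
    · -- p₁ < ∞
      have hp₁0 : p₁ ≠ 0 := (zero_lt_one.trans hp₁).ne'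
      set r₁ : ℝ := p₁.toReal with hr₁def
      have hr₁1 : 1 ≤ r₁ := by
        rw [hr₁def, ← ENNReal.toReal_one]
        exact ENNReal.toReal_mono hp₁top hp₁.le
      have hr₁0 : 0 < r₁ := by linarith
      have hqle : q ≤ r₁ := by
        have h1 : p * ENNReal.ofReal (1 - θ) ≤ p₁ := ENNReal.mul_le_of_le_div hp
        have h2 := ENNReal.toReal_mono hp₁top h1
        rw [ENNReal.toReal_mul, ENNReal.toReal_ofReal h1θ.le] at h2
        rw [hqdef]
        calc (1 - θ) * pr = p.toReal * (1 - θ) := by rw [hprdef]; ring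
          _ ≤ p₁.toReal := h2
      have hGr : ∀ m, ∫⁻ t, ENNReal.ofReal (G m t) ^ r₁ ∂μ ≤ M ^ r₁ := by
        intro m
        have hpt : ∀ᵐ t ∂μ, ENNReal.ofReal (G m t) ^ r₁ ≤ (‖u m t‖₊ : ℝ≥0∞) ^ r₁ := by
          filter_upwards [ae_restrict_mem measurableSet_Icc] with t ht
          refine ENNReal.rpow_le_rpow ?_ hr₁0.le
          rw [← enorm_eq_nnnorm, ← ofReal_norm]
          exact ENNReal.ofReal_le_ofReal (hGle m t ht)
        refine (lintegral_mono_ae hpt).trans ?_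
        have heq : ∫⁻ t, (‖u m t‖₊ : ℝ≥0∞) ^ r₁ ∂μ = (eLpNorm (u m) p₁ μ) ^ r₁ := by
          rw [eLpNorm_eq_lintegral_rpow_enorm_toReal hp₁0 hp₁top, ← ENNReal.rpow_mul,
            one_div, inv_mul_cancel₀ hr₁0.ne', ENNReal.rpow_one]; rfl
        rw [heq]
        exact ENNReal.rpow_le_rpow (hbound (u m) (hu m)) hr₁0.le
      have hGrmeas : ∀ m, Measurable (fun t => ENNReal.ofReal (G m t) ^ r₁) :=
        fun m => ENNReal.continuous_rpow_const.measurable.comp (hGmeas' m)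
      have hLr : ∫⁻ t, (L t) ^ r₁ ∂μ ≤ M ^ r₁ := by
        have hpt : ∀ t, (L t) ^ r₁ =
            Filter.liminf (fun k => ENNReal.ofReal (G (φ k) t) ^ r₁) atTop := by
          intro t
          have h1 := (ENNReal.orderIsoRpow r₁ hr₁0).liminf_apply
            (u := fun k => ENNReal.ofReal (G (φ k) t)) (f := atTop)
          simpa [ENNReal.orderIsoRpow, StrictMono.orderIsoOfRightInverse] using h1
        calc ∫⁻ t, (L t) ^ r₁ ∂μ
            = ∫⁻ t, Filter.liminf (fun k => ENNReal.ofReal (G (φ k) t) ^ r₁) atTop ∂μ :=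
              lintegral_congr fun t => hpt t
          _ ≤ Filter.liminf (fun k => ∫⁻ t, ENNReal.ofReal (G (φ k) t) ^ r₁ ∂μ) atTop :=
              lintegral_liminf_le fun k => hGrmeas (φ k)
          _ ≤ Filter.liminf (fun _ : ℕ => M ^ r₁) atTop :=
              Filter.liminf_le_liminf (Filter.Eventually.of_forall fun k => hGr (φ k))
          _ = M ^ r₁ := Filter.liminf_const _
      have hMr : M ^ r₁ ≠ ∞ := ENNReal.rpow_ne_top_of_nonneg hr₁0.le hM
      have hLfin : ∀ᵐ t ∂μ, L t < ∞ := by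
        have h1 : ∀ᵐ t ∂μ, (L t) ^ r₁ < ∞ := by
          refine ae_lt_top (ENNReal.continuous_rpow_const.measurable.comp hLmeas) ?_
          exact (lt_of_le_of_lt hLr hMr.lt_top).ne
        exact h1.mono fun t h => (ENNReal.rpow_lt_top_iff_of_pos hr₁0).mp h
      have h3q : ((3:ℝ≥0∞) ^ q) ≠ ∞ :=
        ENNReal.rpow_ne_top_of_nonneg hq0 (by simp)
      refine ⟨(3:ℝ≥0∞) ^ q * ((μ Set.univ + M ^ r₁) + (μ Set.univ + M ^ r₁) +
        (3:ℝ≥0∞) ^ q * μ Set.univ), ?_, ?_, hLfin⟩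
      · have h1 : μ Set.univ + M ^ r₁ ≠ ∞ := by
          simp [ENNReal.add_eq_top, hμfin, hMr]
        refine ENNReal.mul_ne_top h3q ?_
        simp [ENNReal.add_eq_top, h1, ENNReal.mul_ne_top h3q hμfin, hμfin, hMr]
      · intro k
        have hb1 : ∫⁻ t, ENNReal.ofReal (G (φ k) t) ^ q ∂μ ≤ μ Set.univ + M ^ r₁ := by
          calc ∫⁻ t, ENNReal.ofReal (G (φ k) t) ^ q ∂μ
              ≤ ∫⁻ t, (1 + ENNReal.ofReal (G (φ k) t) ^ r₁) ∂μ :=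
                lintegral_mono fun t => haux2 _ q r₁ hq0 hqle
            _ = μ Set.univ + ∫⁻ t, ENNReal.ofReal (G (φ k) t) ^ r₁ ∂μ := by
                rw [lintegral_add_left measurable_const, lintegral_one]
            _ ≤ μ Set.univ + M ^ r₁ := add_le_add le_rfl (hGr (φ k))
        have hb2 : ∫⁻ t, (L t) ^ q ∂μ ≤ μ Set.univ + M ^ r₁ := by
          calc ∫⁻ t, (L t) ^ q ∂μ
              ≤ ∫⁻ t, (1 + (L t) ^ r₁) ∂μ :=
                lintegral_mono fun t => haux2 _ q r₁ hq0 hqle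
            _ = μ Set.univ + ∫⁻ t, (L t) ^ r₁ ∂μ := by
                rw [lintegral_add_left measurable_const, lintegral_one]
            _ ≤ μ Set.univ + M ^ r₁ := add_le_add le_rfl hLr
        calc ∫⁻ t, (ENNReal.ofReal (G (φ k) t) + L t + 3) ^ q ∂μ
            ≤ ∫⁻ t, (3:ℝ≥0∞) ^ q *
                (ENNReal.ofReal (G (φ k) t) ^ q + (L t) ^ q + (3:ℝ≥0∞) ^ q) ∂μ :=
              lintegral_mono fun t => haux1 _ _ _ q hq0
          _ = (3:ℝ≥0∞) ^ q * ∫⁻ t,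
                (ENNReal.ofReal (G (φ k) t) ^ q + (L t) ^ q + (3:ℝ≥0∞) ^ q) ∂μ :=
              lintegral_const_mul' _ _ h3q
          _ = (3:ℝ≥0∞) ^ q * ((∫⁻ t, (ENNReal.ofReal (G (φ k) t) ^ q + (L t) ^ q) ∂μ) +
                (3:ℝ≥0∞) ^ q * μ Set.univ) := by
              rw [lintegral_add_right _ measurable_const, lintegral_const]
          _ = (3:ℝ≥0∞) ^ q * ((∫⁻ t, ENNReal.ofReal (G (φ k) t) ^ q ∂μ) +
                (∫⁻ t, (L t) ^ q ∂μ) + (3:ℝ≥0∞) ^ q * μ Set.univ) := by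
              have hLq : Measurable (fun t => (L t) ^ q) :=
                ENNReal.continuous_rpow_const.measurable.comp hLmeas
              rw [lintegral_add_right _ hLq]
          _ ≤ (3:ℝ≥0∞) ^ q * ((μ Set.univ + M ^ r₁) + (μ Set.univ + M ^ r₁) +
                (3:ℝ≥0∞) ^ q * μ Set.univ) := by
              exact mul_le_mul' le_rfl (add_le_add (add_le_add hb1 hb2) le_rfl)
  have hdne : ∀ k, (ENNReal.ofReal C * ENNReal.ofReal (δs k) ^ θ) ^ pr ≠ ∞ :=
    fun k => ENNReal.rpow_ne_top_of_nonneg hpr.le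
      (ENNReal.mul_ne_top ENNReal.ofReal_ne_top
        (ENNReal.rpow_ne_top_of_nonneg hθ0.le ENNReal.ofReal_ne_top))
  have hconst : ENNReal.ofReal C * Kq ^ (1/pr) ≠ ∞ :=
    ENNReal.mul_ne_top ENNReal.ofReal_ne_top
      (ENNReal.rpow_ne_top_of_nonneg (by positivity) hKqne)
  have halg : ∀ (cc A D : ℝ≥0∞), (cc * A ^ (1-θ) * D) ^ pr = (cc * D) ^ pr * A ^ q := by
    intro cc A D
    rw [ENNReal.mul_rpow_of_nonneg _ _ hpr.le, ENNReal.mul_rpow_of_nonneg _ _ hpr.le,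
      ENNReal.mul_rpow_of_nonneg _ _ hpr.le, ← ENNReal.rpow_mul, ← hqdef]
    ring
  have hest : ∀ k, eLpNorm (fun t => i (u (φ k) t) - w t) p μ ≤
      ENNReal.ofReal C * Kq ^ (1/pr) * ENNReal.ofReal (δs k) ^ θ := by
    intro k
    rw [eLpNorm_eq_lintegral_rpow_enorm_toReal hp0 hptop, ← hprdef]
    have hstep : ∫⁻ t, (‖i (u (φ k) t) - w t‖₊ : ℝ≥0∞) ^ pr ∂μ ≤
        (ENNReal.ofReal C * ENNReal.ofReal (δs k) ^ θ) ^ pr * Kq := by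
      have hmono : ∫⁻ t, (‖i (u (φ k) t) - w t‖₊ : ℝ≥0∞) ^ pr ∂μ ≤
          ∫⁻ t, (ENNReal.ofReal C * ENNReal.ofReal (δs k) ^ θ) ^ pr *
            ((ENNReal.ofReal (G (φ k) t) + L t + 3) ^ q) ∂μ := by
        refine lintegral_mono_ae ?_
        filter_upwards [ae_restrict_mem measurableSet_Icc, hLfin] with t ht hLt
        calc (‖i (u (φ k) t) - w t‖₊ : ℝ≥0∞) ^ pr
            ≤ (ENNReal.ofReal C * (ENNReal.ofReal (G (φ k) t) + L t + 3) ^ (1 - θ) *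
                ENNReal.ofReal (δs k) ^ θ) ^ pr :=
              ENNReal.rpow_le_rpow (hkey k t ht hLt) hpr.le
          _ = (ENNReal.ofReal C * ENNReal.ofReal (δs k) ^ θ) ^ pr *
                ((ENNReal.ofReal (G (φ k) t) + L t + 3) ^ q) := halg _ _ _
      refine hmono.trans ?_
      rw [lintegral_const_mul' _ _ (hdne k)]
      exact mul_le_mul' le_rfl (hKq k)
    calc (∫⁻ t, (‖i (u (φ k) t) - w t‖₊ : ℝ≥0∞) ^ pr ∂μ) ^ (1/pr)
        ≤ ((ENNReal.ofReal C * ENNReal.ofReal (δs k) ^ θ) ^ pr * Kq) ^ (1/pr) :=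
          ENNReal.rpow_le_rpow hstep (by positivity)
      _ = (ENNReal.ofReal C * ENNReal.ofReal (δs k) ^ θ) * Kq ^ (1/pr) := by
          rw [ENNReal.mul_rpow_of_nonneg _ _ (by positivity : (0:ℝ) ≤ 1/pr),
            ← ENNReal.rpow_mul, mul_one_div, div_self hpr.ne', ENNReal.rpow_one]
      _ = ENNReal.ofReal C * Kq ^ (1/pr) * ENNReal.ofReal (δs k) ^ θ := by ring
  refine ⟨φ, hφ, w, ?_⟩
  have h1 : Tendsto (fun k => ENNReal.ofReal (δs k)) atTop (𝓝 0) := by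
    rw [← ENNReal.ofReal_zero]
    exact (ENNReal.continuous_ofReal.tendsto 0).comp hδs0
  have h2 : Tendsto (fun k => ENNReal.ofReal (δs k) ^ θ) atTop (𝓝 0) := by
    have h3 := (ENNReal.continuous_rpow_const (y := θ)).tendsto 0
    rw [ENNReal.zero_rpow_of_pos hθ0] at h3
    exact h3.comp h1
  have h4 := ENNReal.Tendsto.const_mul h2 (Or.inr hconst)
  rw [mul_zero] at h4
  exact tendsto_of_tendsto_of_tendsto_of_le_of_le tendsto_const_nhds h4
    (fun k => zero_le) hest
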